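/- Let H be a Hilbert space, P : Dom P ⊂ H → H a closed densely defined linear operator, and suppose there exist bounded operators A, K : H → H with K compact such that A P u + K u = u for all u ∈ Dom P. Then there is a constant C > 0 such that ‖P u‖ ≥ C ‖u‖ for all u ∈ Dom P ∩ (Ker P)⊥, provided Ker P is closed; consequently P has closed range. -/

import Mathlib

/-!
If the estimate failed, there would be unit vectors `uₙ ⊥ Ker P` with `P uₙ → 0`. Then
`uₙ = A P uₙ + K uₙ` has a convergent subsequence because `K` is compact; by closedness of `P`
its limit lies in `Ker P`, and it also lies in `(Ker P)ᗮ`, yet it has norm one.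

For the range: `Ker P` is closed because `P` is, so subtracting the orthogonal projection onto it
shows that every element of the range is `P u` with `u ⊥ Ker P`. The estimate turns a convergent
sequence `P uₙ` of such elements into a Cauchy sequence `uₙ`, and closedness of `P` puts the
limit back in the range.
-/

open Filter Topology

theorem cauchySeq_of_dist_le_mul {α β : Type*} [PseudoMetricSpace α] [PseudoMetricSpace β]
    {a : ℕ → α} {b : ℕ → β} {c : ℝ} (hb : CauchySeq b)
    (hab : ∀ m n, dist (a m) (a n) ≤ c * dist (b m) (b n)) : CauchySeq a := by
  rw [cauchySeq_iff_tendsto_dist_atTop_0] at hb ⊢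
  refine squeeze_zero (fun _ => dist_nonneg) (fun p => hab p.1 p.2) ?_
  simpa using hb.const_mul c

theorem LinearMap.exists_seq_norm_eq_one_tendsto_zero {𝕜 E F : Type*} [RCLike 𝕜]
    [NormedAddCommGroup E] [NormedSpace 𝕜 E] [SeminormedAddCommGroup F] [NormedSpace 𝕜 F]
    (f : E →ₗ[𝕜] F) (S : Submodule 𝕜 E) (h : ∀ C > 0, ∃ u ∈ S, ‖f u‖ < C * ‖u‖) :
    ∃ w : ℕ → E, (∀ n, w n ∈ S ∧ ‖w n‖ = 1) ∧ Tendsto (fun n => f (w n)) atTop (𝓝 0) := by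
  choose u huS hu using fun n : ℕ => h ((n : ℝ) + 1)⁻¹ (by positivity)
  have hu0 : ∀ n, u n ≠ 0 := fun n h0 => by simpa [h0] using hu n
  refine ⟨fun n => (‖u n‖⁻¹ : 𝕜) • u n,
    fun n => ⟨S.smul_mem _ (huS n), norm_smul_inv_norm (hu0 n)⟩, ?_⟩
  have hbound : ∀ n, ‖f ((‖u n‖⁻¹ : 𝕜) • u n)‖ ≤ ((n : ℝ) + 1)⁻¹ := fun n => by
    have hpos : 0 < ‖u n‖ := norm_pos_iff.2 (hu0 n)
    rw [map_smul, norm_smul, norm_inv, RCLike.norm_ofReal, abs_norm, inv_mul_le_iff₀ hpos]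
    linarith [hu n]
  refine squeeze_zero_norm hbound ?_
  simpa [one_div] using tendsto_one_div_add_atTop_nhds_zero_nat (𝕜 := ℝ)

namespace LinearPMap

variable {𝕜 E F : Type*}

section Ring

variable [Ring 𝕜] [AddCommGroup E] [Module 𝕜 E] [AddCommGroup F] [Module 𝕜 F]

def ker (f : E →ₗ.[𝕜] F) : Submodule 𝕜 E :=
  (LinearMap.ker f.toFun).map f.domain.subtype

theorem mem_ker {f : E →ₗ.[𝕜] F} {x : E} : x ∈ f.ker ↔ ∃ hx : x ∈ f.domain, f ⟨x, hx⟩ = 0 := by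
  simp [ker]

theorem mem_ker_iff_mem_graph {f : E →ₗ.[𝕜] F} {x : E} : x ∈ f.ker ↔ (x, 0) ∈ f.graph := by
  simp [ker]

end Ring

section Normed

variable [NontriviallyNormedField 𝕜] [NormedAddCommGroup E] [NormedSpace 𝕜 E]
  [NormedAddCommGroup F] [NormedSpace 𝕜 F] {P : E →ₗ.[𝕜] F}

theorem IsClosed.mem_graph_of_tendsto (hP : P.IsClosed) {ι : Type*} {l : Filter ι} [l.NeBot]
    {u : ι → P.domain} {x : E} {y : F} (hx : Tendsto (fun i => (u i : E)) l (𝓝 x))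
    (hy : Tendsto (fun i => P (u i)) l (𝓝 y)) : (x, y) ∈ P.graph :=
  hP.mem_of_tendsto (hx.prodMk_nhds hy) (Eventually.of_forall fun i => P.mem_graph (u i))

theorem IsClosed.isClosed_ker (hP : P.IsClosed) : _root_.IsClosed (P.ker : Set E) := by
  have : (P.ker : Set E) = (fun x => (x, (0 : F))) ⁻¹' P.graph := by
    ext x
    exact mem_ker_iff_mem_graph
  rw [this]
  exact hP.preimage (by fun_prop)

theorem exists_tendsto_subseq_of_tendsto_zero (A : F →L[𝕜] E) {K : E →L[𝕜] E}
    (hK : IsCompactOperator K) (hAPK : ∀ u : P.domain, A (P u) + K u = u) {w : ℕ → P.domain}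
    (hw : ∀ n, ‖(w n : E)‖ ≤ 1) (hPw : Tendsto (fun n => P (w n)) atTop (𝓝 0)) :
    ∃ z, ∃ φ : ℕ → ℕ, StrictMono φ ∧ Tendsto (fun n => (w (φ n) : E)) atTop (𝓝 z) := by
  obtain ⟨T, hT, hKT⟩ := hK.image_closedBall_subset_compact (𝕜₁ := 𝕜) (f := K.toLinearMap) 1
  obtain ⟨z, -, φ, hφ, hKz⟩ := hT.tendsto_subseq fun n =>
    hKT ⟨(w n : E), mem_closedBall_zero_iff.2 (hw n), rfl⟩
  have hAP : Tendsto (fun n => A (P (w (φ n)))) atTop (𝓝 0) := by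
    simpa [Function.comp_def] using (A.continuous.tendsto 0).comp (hPw.comp hφ.tendsto_atTop)
  refine ⟨z, φ, hφ, ?_⟩
  simpa only [Function.comp_def, ContinuousLinearMap.coe_coe, zero_add, hAPK] using
    hAP.add hKz

theorem IsClosed.isClosed_image_of_bound [CompleteSpace E] (hP : P.IsClosed) {S : Submodule 𝕜 E}
    (hS : _root_.IsClosed (S : Set E)) {C : ℝ} (hC : 0 < C)
    (hbound : ∀ u : P.domain, (u : E) ∈ S → C * ‖(u : E)‖ ≤ ‖P u‖) :
    _root_.IsClosed {y | ∃ u : P.domain, (u : E) ∈ S ∧ P u = y} := by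
  refine isClosed_of_closure_subset fun y hy => ?_
  obtain ⟨x, hx, hxy⟩ := mem_closure_iff_seq_limit.1 hy
  choose u huS hux using hx
  have hcauchy : CauchySeq fun n => (u n : E) := by
    refine cauchySeq_of_dist_le_mul (c := C⁻¹) hxy.cauchySeq fun m n => ?_
    have h := hbound (u m - u n) (S.sub_mem (huS m) (huS n))
    rw [map_sub, hux, hux] at h
    rw [dist_eq_norm, dist_eq_norm, le_inv_mul_iff₀ hC]
    exact h
  obtain ⟨l, hl⟩ := cauchySeq_tendsto_of_complete hcauchy
  have hlP : (l, y) ∈ P.graph := hP.mem_graph_of_tendsto hl (by simpa only [hux] using hxy)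
  exact ⟨⟨l, mem_domain_of_mem_graph hlP⟩, hS.mem_of_tendsto hl (Eventually.of_forall huS),
    ((image_iff _).2 hlP).symm⟩

end Normed

section InnerProduct

variable [RCLike 𝕜] [NormedAddCommGroup E] [InnerProductSpace 𝕜 E]

theorem mem_orthogonal_ker_iff [AddCommGroup F] [Module 𝕜 F] {P : E →ₗ.[𝕜] F} {x : E} :
    x ∈ P.kerᗮ ↔ ∀ v : P.domain, P v = 0 → inner 𝕜 (v : E) x = 0 := by
  simp only [Submodule.mem_orthogonal, mem_ker]
  exact ⟨fun h v hv => h v ⟨v.2, hv⟩, fun h v ⟨hv, hPv⟩ => h ⟨v, hv⟩ hPv⟩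

theorem range_eq_image_orthogonal_ker [AddCommGroup F] [Module 𝕜 F] (P : E →ₗ.[𝕜] F)
    [P.ker.HasOrthogonalProjection] :
    Set.range (fun u : P.domain => P u) = {y | ∃ u : P.domain, (u : E) ∈ P.kerᗮ ∧ P u = y} := by
  refine Set.Subset.antisymm ?_ fun y ⟨u, _, hu⟩ => ⟨u, hu⟩
  rintro _ ⟨u, rfl⟩
  obtain ⟨hk, hPk⟩ := mem_ker.1 (P.ker.starProjection_apply_mem (u : E))
  exact ⟨u - ⟨_, hk⟩, P.ker.sub_starProjection_mem_orthogonal (u : E), by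
    rw [map_sub, hPk, sub_zero]⟩

theorem IsClosed.exists_bound_orthogonal_ker [NormedAddCommGroup F] [NormedSpace 𝕜 F]
    {P : E →ₗ.[𝕜] F} (hP : P.IsClosed) (A : F →L[𝕜] E) {K : E →L[𝕜] E}
    (hK : IsCompactOperator K) (hAPK : ∀ u : P.domain, A (P u) + K u = u) :
    ∃ C > 0, ∀ u : P.domain, (u : E) ∈ P.kerᗮ → C * ‖(u : E)‖ ≤ ‖P u‖ := by
  by_contra! h
  obtain ⟨w, hw, hPw⟩ := P.toFun.exists_seq_norm_eq_one_tendsto_zero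
    (P.kerᗮ.comap P.domain.subtype) (by simpa using h)
  obtain ⟨z, φ, hφ, hz⟩ := exists_tendsto_subseq_of_tendsto_zero A hK hAPK
    (fun n => (hw n).2.le) hPw
  have hz_ker : z ∈ P.ker :=
    mem_ker_iff_mem_graph.2 (hP.mem_graph_of_tendsto hz (hPw.comp hφ.tendsto_atTop))
  have hz_orth : z ∈ P.kerᗮ :=
    P.ker.isClosed_orthogonal.mem_of_tendsto hz (Eventually.of_forall fun n => (hw (φ n)).1)
  have hz_norm : ‖z‖ = 1 := by
    refine tendsto_nhds_unique hz.norm ?_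
    simp only [← Submodule.coe_norm, (hw _).2, tendsto_const_nhds]
  have hz_zero : z = 0 := P.ker.orthogonal_disjoint.le_bot ⟨hz_ker, hz_orth⟩
  simp [hz_zero] at hz_norm

end InnerProduct

end LinearPMap

theorem stmt1_general {H : Type*} [NormedAddCommGroup H] [InnerProductSpace ℂ H] [CompleteSpace H]
    (P : H →ₗ.[ℂ] H) (hPclosed : P.IsClosed)
    (A K : H →L[ℂ] H) (hK : IsCompactOperator K)
    (hAPK : ∀ u : P.domain, A (P u) + K (u : H) = (u : H)) :
    (∃ C : ℝ, 0 < C ∧ ∀ u : P.domain,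
        (∀ v : P.domain, P v = 0 → @inner ℂ H _ (v : H) (u : H) = 0) →
        C * ‖(u : H)‖ ≤ ‖P u‖) ∧
      IsClosed (Set.range fun u : P.domain => P u) := by
  obtain ⟨C, hC, hbound⟩ := hPclosed.exists_bound_orthogonal_ker A hK hAPK
  refine ⟨⟨C, hC, fun u hu => hbound u (LinearPMap.mem_orthogonal_ker_iff.2 hu)⟩, ?_⟩
  have : CompleteSpace P.ker := hPclosed.isClosed_ker.completeSpace_coe
  rw [P.range_eq_image_orthogonal_ker]
  exact hPclosed.isClosed_image_of_bound P.ker.isClosed_orthogonal hC hbound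

/-- If `P` is a closed densely defined operator on a Hilbert space `H`,
`A`, `K` bounded with `K` compact and `A P u + K u = u` for all `u ∈ Dom P`, and `Ker P`
is closed, then there is `C > 0` with `‖P u‖ ≥ C ‖u‖` for all `u ∈ Dom P ∩ (Ker P)ᗮ`;
consequently `P` has closed range. -/
theorem stmt1 {H : Type*} [NormedAddCommGroup H] [InnerProductSpace ℂ H] [CompleteSpace H]
    (P : H →ₗ.[ℂ] H) (hPdense : Dense (P.domain : Set H)) (hPclosed : P.IsClosed)
    (A K : H →L[ℂ] H) (hK : IsCompactOperator K)
    (hAPK : ∀ u : P.domain, A (P u) + K (u : H) = (u : H))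
    (hker : IsClosed {v : H | ∃ hv : v ∈ P.domain, P ⟨v, hv⟩ = 0}) :
    (∃ C : ℝ, 0 < C ∧ ∀ u : P.domain,
        (∀ v : P.domain, P v = 0 → @inner ℂ H _ (v : H) (u : H) = 0) →
        C * ‖(u : H)‖ ≤ ‖P u‖) ∧
      IsClosed (Set.range fun u : P.domain => P u) :=
  stmt1_general P hPclosed A K hK hAPK
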